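/- Assume n > 3f, Ψ ≥ 1 and Cw ≥ 1. Let v, v' be correct nodes and t, t' rounds with 2 < t < t' ≤ t + Cw. If b(v,t) = 1 and b(v',t') = 1, then Ψ divides t' − t. (This is the content of the filtering lemma: after a correct node accepts a pulse in round t, any further pulse accepted by a correct node within the next Cw rounds can occur only at rounds t + kΨ; in particular the earliest such round t' > t satisfies t' = t + Ψ, t' = t + kΨ for some k ≥ 2, or t' > t + Cw.) -/
import Mathlib


/-- Lemma: the filter bounds the frequency of accepted pulses.
A network on `V` with `n = |V| > 3f` nodes and faulty set `F`, `|F| ≤ f`.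
Correct nodes broadcast arbitrary bits `m(u,t)` (the generating block may be
faulty), `mrec` are the received values (agreeing with the sent values for
correct senders), and each correct node computes `M`, `ℓ ∈ {0,…,Ψ}`,
`w ∈ {0,…,Cw}` and `b` by the filtering recursions (round-1 values arbitrary
within ranges).  If correct nodes `v, v'` accept pulses in rounds `t, t'` with
`2 < t < t' ≤ t + Cw` (i.e. `b(v,t) = 1` and `b(v',t') = 1`), then
`Ψ ∣ t' − t`. -/
theorem filtered_pulse_spacing {V : Type*} [Fintype V] [DecidableEq V]
    (F : Finset V) (f Ψ Cw : ℕ)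
    (hn : Fintype.card V > 3 * f) (hF : F.card ≤ f)
    (hΨ : 1 ≤ Ψ) (hCw : 1 ≤ Cw)
    (m M ℓ w b : V → ℕ → ℕ) (mrec : V → V → ℕ → ℕ)
    -- arbitrary bits broadcast by correct nodes; received values agree with
    -- sent values for correct senders:
    (hmbits : ∀ u, u ∉ F → ∀ t, m u t = 0 ∨ m u t = 1)
    (hmrec : ∀ v u, u ∉ F → ∀ t, mrec v u t = m u t)
    -- the filtering recursions at correct nodes:
    (hMbits : ∀ v, v ∉ F → ∀ t, M v t = 0 ∨ M v t = 1)
    (hM : ∀ v, v ∉ F → ∀ t, 1 ≤ t →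
      (M v (t + 1) = 1 ↔
        Fintype.card V - f ≤ (Finset.univ.filter fun u => mrec v u t = 1).card))
    (hℓrange : ∀ v, v ∉ F → ∀ t, ℓ v t ≤ Ψ)
    (hℓ : ∀ v, v ∉ F → ∀ t, 1 ≤ t →
      ℓ v (t + 1) =
        if f + 1 ≤ (Finset.univ.filter fun u => mrec v u t = 1).card then 0
        else min Ψ (ℓ v t + 1))
    (hwrange : ∀ v, v ∉ F → ∀ t, w v t ≤ Cw)
    (hw : ∀ v, v ∉ F → ∀ t, 1 ≤ t →
      w v (t + 1) =
        if (M v (t + 1) = 0 ∧ ℓ v (t + 1) = 0) ∨ (M v (t + 1) = 1 ∧ ℓ v t ≠ Ψ - 1)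
        then Cw else w v t - 1)
    (hb : ∀ v, v ∉ F → ∀ t, b v t = if w v t = 0 ∧ M v t = 1 then 1 else 0) :
    ∀ v v', v ∉ F → v' ∉ F → ∀ t t', 2 < t → t < t' → t' ≤ t + Cw →
      b v t = 1 → b v' t' = 1 → Ψ ∣ (t' - t) := by
  intro v v' hv hv' t t' ht2 htt' htCw hbv hbv'
  set n := Fintype.card V with hn'
  -- unpack b
  have hbu : ∀ x s, x ∉ F → b x s = 1 → w x s = 0 ∧ M x s = 1 := by
    intro x s hx hbs
    have h1 := hb x hx s
    rw [hbs] at h1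
    by_cases h : w x s = 0 ∧ M x s = 1
    · exact h
    · rw [if_neg h] at h1; omega
  obtain ⟨hwv, hMv⟩ := hbu v t hv hbv
  obtain ⟨hwv', hMv'⟩ := hbu v' t' hv' hbv'
  -- counting lemma
  have key : ∀ (x : V) (s : ℕ), x ∉ F →
      n - f ≤ (Finset.univ.filter fun u => mrec x u s = 1).card →
      ∀ y, y ∉ F → f + 1 ≤ (Finset.univ.filter fun u => mrec y u s = 1).card := by
    intro x s hx hcard y hy
    classical
    set C := Finset.univ.filter (fun u => u ∉ F ∧ m u s = 1) with hC
    have hsub1 : (Finset.univ.filter fun u => mrec x u s = 1) ⊆ C ∪ F := by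
      intro u hu
      simp only [Finset.mem_filter, Finset.mem_univ, true_and] at hu
      by_cases huF : u ∈ F
      · exact Finset.mem_union_right _ huF
      · refine Finset.mem_union_left _ ?_
        simp only [hC, Finset.mem_filter, Finset.mem_univ, true_and]
        exact ⟨huF, by rw [← hmrec x u huF s]; exact hu⟩
    have hc1 : n - f ≤ C.card + f := by
      calc n - f ≤ (Finset.univ.filter fun u => mrec x u s = 1).card := hcard
        _ ≤ (C ∪ F).card := Finset.card_le_card hsub1
        _ ≤ C.card + F.card := Finset.card_union_le _ _
        _ ≤ C.card + f := by omega
    have hsub2 : C ⊆ Finset.univ.filter fun u => mrec y u s = 1 := by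
      intro u hu
      simp only [hC, Finset.mem_filter, Finset.mem_univ, true_and] at hu ⊢
      rw [hmrec y u hu.1 s]; exact hu.2
    have := Finset.card_le_card hsub2
    omega
  -- ℓ of v' resets at round t
  have hℓt : ℓ v' t = 0 := by
    have ht1 : 1 ≤ t - 1 := by omega
    have hMt : n - f ≤ (Finset.univ.filter fun u => mrec v u (t-1) = 1).card := by
      have := (hM v hv (t-1) ht1).mp (by rw [show t-1+1 = t by omega]; exact hMv)
      exact this
    have hcnt := key v (t-1) hv hMt v' hv'
    have h2 := hℓ v' hv' (t-1) ht1
    rw [show t-1+1 = t by omega] at h2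
    rw [h2, if_pos hcnt]
  -- w decreases by at most 1
  have hwchain : ∀ s r, 1 ≤ s → s ≤ r → w v' s ≤ w v' r + (r - s) := by
    intro s r hs hsr
    induction r, hsr using Nat.le_induction with
    | base => omega
    | succ r hr ih =>
      have hst := hw v' hv' r (by omega)
      have hrg := hwrange v' hv' r
      have : w v' r ≤ w v' (r+1) + 1 := by
        by_cases hc : (M v' (r + 1) = 0 ∧ ℓ v' (r + 1) = 0) ∨
            (M v' (r + 1) = 1 ∧ ℓ v' r ≠ Ψ - 1)
        · rw [hst, if_pos hc]; omega
        · rw [hst, if_neg hc]; omega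
      omega
  -- no reset of w at v' in the window
  have hnores : ∀ s, t ≤ s → s + 1 ≤ t' →
      ¬((M v' (s+1) = 0 ∧ ℓ v' (s+1) = 0) ∨ (M v' (s+1) = 1 ∧ ℓ v' s ≠ Ψ - 1)) := by
    intro s hs hs' hcond
    have h1 := hw v' hv' s (by omega)
    rw [if_pos hcond] at h1
    have h2 := hwchain (s+1) t' (by omega) hs'
    rw [h1, hwv'] at h2
    omega
  -- the ℓ-step dichotomy in the window
  have hstep : ∀ s, t ≤ s → s + 1 ≤ t' →
      (ℓ v' (s+1) = 0 ∧ ℓ v' s = Ψ - 1) ∨ (ℓ v' (s+1) = min Ψ (ℓ v' s + 1)) := by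
    intro s hs hs'
    have hnr := hnores s hs hs'
    have hrec := hℓ v' hv' s (by omega)
    by_cases hc : f + 1 ≤ (Finset.univ.filter fun u => mrec v' u s = 1).card
    · rw [if_pos hc] at hrec
      left
      refine ⟨hrec, ?_⟩
      rcases hMbits v' hv' (s+1) with hM0 | hM1
      · exact absurd (Or.inl ⟨hM0, hrec⟩) hnr
      · by_contra hne
        exact hnr (Or.inr ⟨hM1, hne⟩)
    · rw [if_neg hc] at hrec
      right; exact hrec
  -- mod helpers
  have hsucc : ∀ a : ℕ, a % Ψ = Ψ - 1 → (a+1) % Ψ = 0 := by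
    intro a ha
    rcases eq_or_lt_of_le hΨ with h1 | h1
    · rw [← h1, Nat.mod_one]
    · rw [Nat.add_mod, ha, Nat.mod_eq_of_lt h1,
        show Ψ - 1 + 1 = Ψ by omega, Nat.mod_self]
  have hsucc2 : ∀ a : ℕ, a % Ψ + 1 < Ψ → (a+1) % Ψ = a % Ψ + 1 := by
    intro a ha
    rw [Nat.add_mod, Nat.mod_eq_of_lt (show 1 < Ψ by omega),
      Nat.mod_eq_of_lt ha]
  -- the invariant
  have hinv : ∀ s, t ≤ s → s ≤ t' → (ℓ v' s = (s - t) % Ψ ∨ ℓ v' s = Ψ) := by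
    intro s hs
    induction s, hs using Nat.le_induction with
    | base => intro _; left; rw [Nat.sub_self, Nat.zero_mod]; exact hℓt
    | succ s hs ih =>
      intro hs'
      rcases ih (by omega) with hmod | hcap
      · rcases hstep s hs (by omega) with ⟨h0, hprev⟩ | hmin
        · left
          have hm : (s - t) % Ψ = Ψ - 1 := by rw [← hmod, hprev]
          rw [h0, show s+1-t = (s-t)+1 by omega, hsucc _ hm]
        · have hlt : (s - t) % Ψ < Ψ := Nat.mod_lt _ (by omega)
          by_cases hcase : (s - t) % Ψ + 1 < Ψ
          · left
            rw [hmin, hmod, min_eq_right (by omega),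
              show s+1-t = (s-t)+1 by omega, hsucc2 _ hcase]
          · right
            rw [hmin, hmod, show (s-t) % Ψ + 1 = Ψ by omega, min_self]
      · rcases hstep s hs (by omega) with ⟨h0, hprev⟩ | hmin
        · exfalso; rw [hcap] at hprev; omega
        · right; rw [hmin, hcap, min_eq_left (by omega)]
  -- ℓ v' (t'-1) = Ψ - 1 from the pulse at t'
  have hℓ'1 : ℓ v' (t'-1) = Ψ - 1 := by
    have hnr := hnores (t'-1) (by omega) (by omega)
    rw [show t'-1+1 = t' by omega] at hnr
    by_contra hne
    exact hnr (Or.inr ⟨hMv', hne⟩)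
  have hfin : (t' - 1 - t) % Ψ = Ψ - 1 := by
    rcases hinv (t'-1) (by omega) (by omega) with h | h
    · rw [← h, hℓ'1]
    · rw [h] at hℓ'1; omega
  have hz : (t' - 1 - t + 1) % Ψ = 0 := hsucc _ hfin
  rw [show t' - 1 - t + 1 = t' - t by omega] at hz
  exact Nat.dvd_of_mod_eq_zero hz
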